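/- Let G be a 3-partite undirected graph with parts A = {a₁,…,aₙ}, B = {b₁,…,bₙ}, C = {c₁,…,cₙ} and edge set E (every edge of G joins vertices from two different parts). Construct a labeled digraph H over the alphabet {α₁, α₂} with vertex set A ∪ B ∪ C ∪ A' ∪ {u, v}, where A' = {a₁',…,aₙ'} and u, v are fresh, and with the following labeled edges: (u, a₁) and (a_i, a_{i+1}) for 1 ≤ i ≤ n−1, each labeled α₁; (a_i, b_j) labeled α₂ for every edge {a_i, b_j} ∈ E; (b_i, c_j) labeled α₂ for every edge {b_i, c_j} ∈ E; (c_i, a_j') labeled α₂ for every edge {c_i, a_j} ∈ E; and (a_{i+1}', a_i') for 1 ≤ i ≤ n−1 and (a₁', v), each labeled α₁. Then there is a walk from u to v in H whose label is a palindrome if and only if G contains a triangle, i.e. there exist i, j, l such that {a_i, b_j}, {b_j, c_l}, {c_l, a_i} are all edges of G. -/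

import Mathlib

/-- The alphabet {α₁, α₂}. -/
inductive Alpha where
  | a1 : Alpha
  | a2 : Alpha
deriving DecidableEq

/-- A labeled walk in a `σ`-labeled digraph given by the edge relation `E`. -/
inductive LWalk {V σ : Type*} (E : V → σ → V → Prop) : V → List σ → V → Prop
  | nil (v : V) : LWalk E v [] v
  | cons {u v w : V} {c : σ} {l : List σ} :
      E u c v → LWalk E v l w → LWalk E u (c :: l) w

/-- Vertices of the constructed graph `H`: the copies `A`, `B`, `C` of the parts,
the fresh copies `A' = {a₁',…,aₙ'}`, and the fresh vertices `u` and `v`. -/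
inductive Vtx (n : ℕ) where
  | vA : Fin n → Vtx n
  | vB : Fin n → Vtx n
  | vC : Fin n → Vtx n
  | vA' : Fin n → Vtx n
  | vu : Vtx n
  | vv : Vtx n

/-- The labeled edges of `H`, where the tripartite graph `G` is given by the relations
`EAB`, `EBC`, `ECA` describing its edges between the respective parts
(vertices are 0-indexed, so `a₁` is `Vtx.vA ⟨0, _⟩`). -/
def triEdge {n : ℕ} (EAB EBC ECA : Fin n → Fin n → Prop) :
    Vtx n → Alpha → Vtx n → Prop := fun x c y =>
  (c = Alpha.a1 ∧
    ((∃ h : 0 < n, x = Vtx.vu ∧ y = Vtx.vA ⟨0, h⟩) ∨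
     (∃ (i : ℕ) (h : i + 1 < n), x = Vtx.vA ⟨i, by omega⟩ ∧ y = Vtx.vA ⟨i + 1, h⟩) ∨
     (∃ (i : ℕ) (h : i + 1 < n), x = Vtx.vA' ⟨i + 1, h⟩ ∧ y = Vtx.vA' ⟨i, by omega⟩) ∨
     (∃ h : 0 < n, x = Vtx.vA' ⟨0, h⟩ ∧ y = Vtx.vv))) ∨
  (c = Alpha.a2 ∧
    ((∃ i j : Fin n, EAB i j ∧ x = Vtx.vA i ∧ y = Vtx.vB j) ∨
     (∃ i j : Fin n, EBC i j ∧ x = Vtx.vB i ∧ y = Vtx.vC j) ∨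
     (∃ i j : Fin n, ECA i j ∧ x = Vtx.vC i ∧ y = Vtx.vA' j)))

/-!
Every walk from `u` to `v` climbs the `A`-chain with `α₁`-steps to some `aᵢ`, crosses a path
`aᵢ → bⱼ → cₗ → a'ₖ` of `G` with three `α₂`-steps, and descends the `A'`-chain to `v`, so its
label is `α₁^(i+1) α₂³ α₁^(k+1)`. This word is a palindrome exactly when `k = i`, i.e. when the
path closes up to a triangle of `G`.
-/

open List

theorem LWalk.append {V σ : Type*} {E : V → σ → V → Prop} {x y z : V} {w₁ w₂ : List σ}
    (h₁ : LWalk E x w₁ y) (h₂ : LWalk E y w₂ z) : LWalk E x (w₁ ++ w₂) z := by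
  induction h₁ with
  | nil => exact h₂
  | cons e _ ih => exact .cons e (ih h₂)

theorem List.eq_of_replicate_append_cons_eq {α : Type*} {a b : α} (hab : a ≠ b) :
    ∀ {m k : ℕ} {r₁ r₂ : List α},
      replicate m a ++ b :: r₁ = replicate k a ++ b :: r₂ → m = k
  | 0, 0, _, _, _ => rfl
  | 0, _ + 1, _, _, h => absurd (cons.inj h).1 hab.symm
  | _ + 1, 0, _, _, h => absurd (cons.inj h).1 hab
  | _ + 1, _ + 1, _, _, h =>
    congrArg (· + 1) (eq_of_replicate_append_cons_eq hab (cons.inj h).2)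

def triangleWord (p k : ℕ) : List Alpha :=
  replicate p .a1 ++ .a2 :: .a2 :: .a2 :: replicate (k + 1) .a1

theorem triangleWord_reverse_eq_self_iff {p k : ℕ} :
    (triangleWord p k).reverse = triangleWord p k ↔ p = k + 1 := by
  constructor
  · intro h
    simp only [triangleWord, reverse_append, reverse_cons, reverse_replicate, append_assoc,
      cons_append, nil_append] at h
    exact (eq_of_replicate_append_cons_eq (by decide) h).symm
  · rintro rfl
    simp [triangleWord]

section Reduction

variable {n : ℕ} {EAB EBC ECA : Fin n → Fin n → Prop}

theorem lwalk_vu_vA (i : Fin n) :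
    LWalk (triEdge EAB EBC ECA) .vu (replicate (i + 1) .a1) (.vA i) := by
  obtain ⟨k, hk⟩ := i
  induction k with
  | zero => exact .cons (Or.inl ⟨rfl, Or.inl ⟨hk, rfl, rfl⟩⟩) (.nil _)
  | succ k ih =>
    rw [replicate_succ']
    exact (ih (by omega)).append
      (.cons (Or.inl ⟨rfl, Or.inr (Or.inl ⟨k, hk, rfl, rfl⟩)⟩) (.nil _))

theorem lwalk_vA'_vv (i : Fin n) :
    LWalk (triEdge EAB EBC ECA) (.vA' i) (replicate (i + 1) .a1) .vv := by
  obtain ⟨k, hk⟩ := i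
  induction k with
  | zero => exact .cons (Or.inl ⟨rfl, Or.inr (Or.inr (Or.inr ⟨hk, rfl, rfl⟩))⟩) (.nil _)
  | succ k ih =>
    exact .cons (Or.inl ⟨rfl, Or.inr (Or.inr (Or.inl ⟨k, hk, rfl, rfl⟩))⟩) (ih (by omega))

theorem lwalk_vA_vA' {i j l k : Fin n} (hij : EAB i j) (hjl : EBC j l) (hlk : ECA l k) :
    LWalk (triEdge EAB EBC ECA) (.vA i) [.a2, .a2, .a2] (.vA' k) :=
  .cons (Or.inr ⟨rfl, Or.inl ⟨i, j, hij, rfl, rfl⟩⟩) <|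
    .cons (Or.inr ⟨rfl, Or.inr (Or.inl ⟨j, l, hjl, rfl, rfl⟩)⟩) <|
      .cons (Or.inr ⟨rfl, Or.inr (Or.inr ⟨l, k, hlk, rfl, rfl⟩)⟩) (.nil _)

variable (EAB EBC ECA) in
def LabelToV : Vtx n → List Alpha → Prop
  | .vv, w => w = []
  | .vA' k, w => w = replicate (k + 1) .a1
  | .vC l, w => ∃ k, ECA l k ∧ w = .a2 :: replicate (k + 1) .a1
  | .vB j, w => ∃ l k, EBC j l ∧ ECA l k ∧ w = .a2 :: .a2 :: replicate (k + 1) .a1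
  | .vA i, w => ∃ i' j l k, i ≤ i' ∧ EAB i' j ∧ EBC j l ∧ ECA l k ∧
      w = triangleWord (i' - i : ℕ) k
  | .vu, w => ∃ i j l k, EAB i j ∧ EBC j l ∧ ECA l k ∧ w = triangleWord (i + 1 : ℕ) k

theorem labelToV_of_lwalk {x : Vtx n} {w : List Alpha}
    (hw : LWalk (triEdge EAB EBC ECA) x w .vv) : LabelToV EAB EBC ECA x w := by
  generalize hz : (Vtx.vv : Vtx n) = z at hw
  induction hw with
  | nil => subst hz; rfl
  | cons e _ ih =>
    have hS := ih hz
    rcases e with ⟨rfl, e⟩ | ⟨rfl, e⟩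
    · rcases e with ⟨_, rfl, rfl⟩ | ⟨i, _, rfl, rfl⟩ | ⟨i, _, rfl, rfl⟩ | ⟨_, rfl, rfl⟩
      · obtain ⟨i', j, l, k, -, hij, hjl, hlk, rfl⟩ := hS
        exact ⟨i', j, l, k, hij, hjl, hlk, rfl⟩
      · obtain ⟨i', j, l, k, hle, hij, hjl, hlk, rfl⟩ := hS
        have hle : i + 1 ≤ (i' : ℕ) := hle
        refine ⟨i', j, l, k, Nat.le_of_succ_le hle, hij, hjl, hlk, ?_⟩
        rw [triangleWord, show (i' : ℕ) - i = (i' - (i + 1)) + 1 by omega, replicate_succ]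
        rfl
      · exact congrArg (.a1 :: ·) hS
      · exact congrArg (.a1 :: ·) hS
    · rcases e with ⟨i, j, hij, rfl, rfl⟩ | ⟨j, l, hjl, rfl, rfl⟩ | ⟨l, k, hlk, rfl, rfl⟩
      · obtain ⟨l, k, hjl, hlk, rfl⟩ := hS
        exact ⟨i, j, l, k, le_rfl, hij, hjl, hlk, by simp [triangleWord]⟩
      · obtain ⟨k, hlk, rfl⟩ := hS
        exact ⟨l, k, hjl, hlk, rfl⟩
      · exact ⟨k, hlk, congrArg (.a2 :: ·) hS⟩

end Reduction

theorem stmt8_general {n : ℕ} (EAB EBC ECA : Fin n → Fin n → Prop) :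
    (∃ w : List Alpha, w.reverse = w ∧
        LWalk (triEdge EAB EBC ECA) Vtx.vu w Vtx.vv) ↔
      ∃ i j l : Fin n, EAB i j ∧ EBC j l ∧ ECA l i := by
  constructor
  · rintro ⟨w, hpal, hw⟩
    obtain ⟨i, j, l, k, hij, hjl, hlk, rfl⟩ := labelToV_of_lwalk hw
    have hki : k = i := Fin.ext (by simpa using (triangleWord_reverse_eq_self_iff.1 hpal).symm)
    exact ⟨i, j, l, hij, hjl, hki ▸ hlk⟩
  · rintro ⟨i, j, l, hij, hjl, hli⟩
    exact ⟨triangleWord (i + 1) i, triangleWord_reverse_eq_self_iff.2 rfl,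
      (lwalk_vu_vA i).append ((lwalk_vA_vA' hij hjl hli).append (lwalk_vA'_vv i))⟩

/-- There is a walk from `u` to `v` in `H` whose label is a palindrome iff `G` has a
triangle. -/
theorem stmt8 {n : ℕ} (hn : 0 < n) (EAB EBC ECA : Fin n → Fin n → Prop) :
    (∃ w : List Alpha, w.reverse = w ∧
        LWalk (triEdge EAB EBC ECA) Vtx.vu w Vtx.vv) ↔
      ∃ i j l : Fin n, EAB i j ∧ EBC j l ∧ ECA l i :=
  stmt8_general EAB EBC ECA
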